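/- arXiv:2410.22507 — 5 statements merged into one kernel-verified Lean document; each statement's English description precedes it below -/
import Mathlib

section
/- Let K be a totally real number field, L a totally positive definite quadratic O_K-lattice, and α a totally positive integer not represented by L such that L represents every totally positive integer of norm strictly less than N(α). If β is a totally positive integer with N(β) ≥ N(α) and β is not of the form αε² for a unit ε, then the orthogonal sum L ⊥ ⟨β⟩ does not represent α. -/
open NumberField

def TotReal (K : Type) [Field K] [NumberField K] : Prop :=
  ∀ v : InfinitePlace K, v.IsReal

def TPos {K : Type} [Field K] [NumberField K] (a : 𝓞 K) : Prop :=
  ∀ φ : K →+* ℝ, 0 < φ (a : K)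

noncomputable def Nm {K : Type} [Field K] [NumberField K] (a : 𝓞 K) : ℤ :=
  Algebra.norm ℤ a

structure QLat (K : Type) [Field K] [NumberField K] where
  carrier : Type
  [isAddCommGroup : AddCommGroup carrier]
  [isModule : Module (𝓞 K) carrier]
  [isFinite : Module.Finite (𝓞 K) carrier]
  [isTorsionFree : NoZeroSMulDivisors (𝓞 K) carrier]
  Q : QuadraticForm (𝓞 K) carrier

attribute [instance] QLat.isAddCommGroup QLat.isModule QLat.isFinite QLat.isTorsionFree

def QLat.PosDef {K : Type} [Field K] [NumberField K] (L : QLat K) : Prop :=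
  ∀ v : L.carrier, v ≠ 0 → TPos (L.Q v)

def QLat.Rep {K : Type} [Field K] [NumberField K] (L : QLat K) (a : 𝓞 K) : Prop :=
  ∃ v : L.carrier, L.Q v = a

/-!
If `Q(v) + βx² = α` with `x ≠ 0`, then `βx²` is totally positive of norm
`N(β) N(x)² ≥ N(β) ≥ N(α)`. When `v ≠ 0` the summand `Q(v)` is totally positive, so
`βx² < α` at every real embedding and hence `N(βx²) < N(α)`, which is absurd. When `v = 0`
we get `α = βx²`, which forces `N(x)² = 1`, so `x` is a unit and `β = α (x⁻¹)²`.
-/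

namespace NumberField.IsTotallyReal

variable {K : Type*} [Field K] [NumberField K] [IsTotallyReal K]

noncomputable def realEmbeddingsEquiv : (K →+* ℝ) ≃ (K →+* ℂ) where
  toFun ψ := Complex.ofRealHom.comp ψ
  invFun σ := (complexEmbedding_isReal σ).embedding
  left_inv ψ := by
    ext x
    simp [ComplexEmbedding.IsReal.embedding]
  right_inv σ := by
    ext x
    exact ComplexEmbedding.IsReal.coe_embedding_apply _ x

theorem norm_eq_prod_realEmbeddings (x : K) :
    ((Algebra.norm ℚ x : ℚ) : ℝ) = ∏ φ : K →+* ℝ, φ x := by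
  apply Complex.ofReal_injective
  calc (((Algebra.norm ℚ x : ℚ) : ℝ) : ℂ)
      = algebraMap ℚ ℂ (Algebra.norm ℚ x) := rfl
    _ = ∏ σ : K →ₐ[ℚ] ℂ, σ x := Algebra.norm_eq_prod_embeddings ℚ ℂ x
    _ = ∏ σ : K →+* ℂ, σ x :=
        (Fintype.prod_equiv (RingHom.equivRatAlgHom K ℂ) _ _ fun _ ↦ rfl).symm
    _ = ∏ φ : K →+* ℝ, (φ x : ℂ) :=
        (Fintype.prod_equiv realEmbeddingsEquiv _ _ fun _ ↦ rfl).symm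
    _ = ((∏ φ : K →+* ℝ, φ x : ℝ) : ℂ) := (Complex.ofReal_prod _ _).symm

instance : Nonempty (K →+* ℝ) :=
  ⟨realEmbeddingsEquiv.symm (Classical.arbitrary _)⟩

end NumberField.IsTotallyReal

theorem TotReal.isTotallyReal {K : Type} [Field K] [NumberField K] (hK : TotReal K) :
    IsTotallyReal K :=
  ⟨hK⟩

section TotallyPositive

variable {K : Type} [Field K] [NumberField K]

theorem Nm_mul_sq (b x : 𝓞 K) : Nm (b * x ^ 2) = Nm b * Nm x ^ 2 := by
  simp only [Nm, map_mul, map_pow]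

theorem Nm_ne_zero {x : 𝓞 K} (hx : x ≠ 0) : Nm x ≠ 0 := by
  have : (Algebra.norm ℚ (x : K) : ℚ) ≠ 0 :=
    Algebra.norm_ne_zero_iff.mpr (RingOfIntegers.coe_ne_zero_iff.mpr hx)
  rw [← Algebra.coe_norm_int] at this
  exact_mod_cast this

theorem isUnit_of_Nm_sq_eq_one {x : 𝓞 K} (h : Nm x ^ 2 = 1) : IsUnit x := by
  have habs : |Nm x| = 1 := by
    rw [← pow_eq_one_iff_of_nonneg (abs_nonneg _) two_ne_zero, sq_abs, h]
  rw [NumberField.isUnit_iff_norm, RingOfIntegers.coe_norm, ← Algebra.coe_norm_int]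
  exact_mod_cast habs

theorem TPos.mul_sq {b x : 𝓞 K} (hb : TPos b) (hx : x ≠ 0) : TPos (b * x ^ 2) := by
  intro φ
  have hφx : φ (x : K) ≠ 0 := (map_ne_zero φ).mpr (RingOfIntegers.coe_ne_zero_iff.mpr hx)
  have := hb φ
  push_cast
  rw [map_mul, map_pow]
  positivity

variable [IsTotallyReal K]

theorem Nm_eq_prod (a : 𝓞 K) : (Nm a : ℝ) = ∏ φ : K →+* ℝ, φ (a : K) := by
  rw [← IsTotallyReal.norm_eq_prod_realEmbeddings, Nm, ← Algebra.coe_norm_int, Rat.cast_intCast]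

theorem TPos.Nm_pos {a : 𝓞 K} (ha : TPos a) : 0 < Nm a := by
  have : (0 : ℝ) < Nm a := by
    rw [Nm_eq_prod]
    exact Finset.prod_pos fun φ _ ↦ ha φ
  exact_mod_cast this

theorem Nm_lt_Nm_add {b c : 𝓞 K} (hb : TPos b) (hc : TPos c) : Nm b < Nm (c + b) := by
  have : (Nm b : ℝ) < Nm (c + b) := by
    rw [Nm_eq_prod, Nm_eq_prod]
    refine Finset.prod_lt_prod_of_nonempty (fun φ _ ↦ hb φ) (fun φ _ ↦ ?_) Finset.univ_nonempty
    have := hc φ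
    push_cast
    rw [map_add]
    linarith
  exact_mod_cast this

theorem Nm_le_Nm_mul_sq {b x : 𝓞 K} (hb : TPos b) (hx : x ≠ 0) : Nm b ≤ Nm (b * x ^ 2) := by
  rw [Nm_mul_sq]
  have hx1 : 1 ≤ Nm x ^ 2 := by
    have := Int.one_le_abs (Nm_ne_zero hx)
    nlinarith [sq_abs (Nm x)]
  nlinarith [hb.Nm_pos]

theorem exists_unit_of_mul_sq_eq {α β x : 𝓞 K} (hβ : TPos β) (hNβ : Nm α ≤ Nm β)
    (hx : x ≠ 0) (h : β * x ^ 2 = α) : ∃ ε : (𝓞 K)ˣ, β = α * (ε : 𝓞 K) ^ 2 := by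
  have hsq : Nm x ^ 2 = 1 := by
    have := Nm_le_Nm_mul_sq hβ hx
    rw [h] at this
    have hNα : Nm α = Nm β * Nm x ^ 2 := by rw [← h, Nm_mul_sq]
    nlinarith [hβ.Nm_pos]
  obtain ⟨u, rfl⟩ := isUnit_of_Nm_sq_eq_one hsq
  exact ⟨u⁻¹, by rw [← h, mul_assoc, ← mul_pow, Units.mul_inv, one_pow, mul_one]⟩

end TotallyPositive

theorem stmt0_general {K : Type} [Field K] [NumberField K] (hK : TotReal K)
    (L : QLat K) (hpos : L.PosDef)
    (α : 𝓞 K) (hnotrep : ¬ L.Rep α)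
    (β : 𝓞 K) (hβ : TPos β) (hNβ : Nm α ≤ Nm β)
    (hne : ¬ ∃ ε : (𝓞 K)ˣ, β = α * (ε : 𝓞 K) ^ 2) :
    ¬ ∃ (v : L.carrier) (x : 𝓞 K), L.Q v + β * x ^ 2 = α := by
  have := hK.isTotallyReal
  rintro ⟨v, x, hvx⟩
  rcases eq_or_ne x 0 with rfl | hx
  · exact hnotrep ⟨v, by simpa using hvx⟩
  rcases eq_or_ne v 0 with rfl | hv
  · exact hne (exists_unit_of_mul_sq_eq hβ hNβ hx (by simpa using hvx))
  have hlt : Nm (β * x ^ 2) < Nm α := hvx ▸ Nm_lt_Nm_add (hβ.mul_sq hx) (hpos v hv)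
  exact (hNβ.trans (Nm_le_Nm_mul_sq hβ hx)).not_gt hlt

/-- If `L` has $S$-truant $α$ (represents all totally positive integers of
smaller norm, not $α$), and $β$ is totally positive of norm $≥ N(α)$ not of the form
$αε²$, then $L ⊥ ⟨β⟩$ does not represent $α$. -/
theorem stmt0 {K : Type} [Field K] [NumberField K] (hK : TotReal K)
    (L : QLat K) (hpos : L.PosDef)
    (α : 𝓞 K) (hα : TPos α) (hnotrep : ¬ L.Rep α)
    (hbelow : ∀ γ : 𝓞 K, TPos γ → Nm γ < Nm α → L.Rep γ)
    (β : 𝓞 K) (hβ : TPos β) (hNβ : Nm α ≤ Nm β)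
    (hne : ¬ ∃ ε : (𝓞 K)ˣ, β = α * (ε : 𝓞 K) ^ 2) :
    ¬ ∃ (v : L.carrier) (x : 𝓞 K), L.Q v + β * x ^ 2 = α :=
  stmt0_general hK L hpos α hnotrep β hβ hNβ hne
end

section
/- Let K be a totally real number field and β ∈ O_K⁺ a squarefree indecomposable totally positive integer. Let α₁, …, α_k be representatives of all classes in O_K⁺/U_K² of norm strictly less than N(β). Then the diagonal lattice ⟨α₁, …, α_k⟩ represents every totally positive integer of norm less than N(β), but does not represent β. -/
open NumberField

/-!
A totally positive `γ` of norm `< N(β)` is `αᵢ ε²` for a unit `ε`, which the diagonal form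
represents with a single nonzero coordinate. Conversely, in a representation
`β = Σ αᵢ xᵢ²` every nonzero term is totally positive, so indecomposability leaves exactly
one term `β = αᵢ x²`; squarefreeness makes `x` a unit, whence `N(β) = N(αᵢ)`, contradicting
`N(αᵢ) < N(β)`.
-/

theorem sum_mul_pi_single_sq {ι R : Type*} [Fintype ι] [DecidableEq ι] [CommSemiring R]
    (α : ι → R) (i : ι) (a : R) :
    ∑ j, α j * (Pi.single i a : ι → R) j ^ 2 = α i * a ^ 2 :=
  (Fintype.sum_eq_single i fun j hj => by simp [hj]).trans (by simp)

theorem nm_mul_sq_of_isUnit {K : Type} [Field K] [NumberField K] (a : 𝓞 K) {u : 𝓞 K}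
    (hu : IsUnit u) : Nm (a * u ^ 2) = Nm a := by
  have hNu : IsUnit (Nm u) := hu.map (Algebra.norm ℤ)
  rw [Nm, map_mul, map_pow, ← Nm, ← Nm, Int.isUnit_sq hNu, mul_one]

section TotallyPositive

variable {K : Type} [Field K] [NumberField K] {ι : Type*}

theorem tPos_sum_mul_sq {s : Finset ι} {α x : ι → 𝓞 K} (hα : ∀ i ∈ s, TPos (α i))
    (hx : ∃ i ∈ s, x i ≠ 0) : TPos (∑ i ∈ s, α i * x i ^ 2) := by
  intro φ
  push_cast
  rw [map_sum]
  obtain ⟨i, hi, hxi⟩ := hx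
  have hφxi : φ (x i : K) ≠ 0 := by simpa using hxi
  refine Finset.sum_pos' (fun j hj => ?_) ⟨i, hi, ?_⟩
  · have := hα j hj φ
    rw [map_mul, map_pow]
    positivity
  · have := hα i hi φ
    rw [map_mul, map_pow]
    positivity

theorem exists_eq_mul_sq_of_indecomposable [Fintype ι] [DecidableEq ι] {β : 𝓞 K}
    (hind : ¬ ∃ γ δ : 𝓞 K, TPos γ ∧ TPos δ ∧ β = γ + δ) (hβ : β ≠ 0) {α x : ι → 𝓞 K}
    (hα : ∀ i, TPos (α i)) (hx : ∑ i, α i * x i ^ 2 = β) :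
    ∃ i, β = α i * x i ^ 2 := by
  obtain ⟨i, hxi⟩ : ∃ i, x i ≠ 0 := by
    by_contra! h
    exact hβ (by simp [← hx, h])
  refine ⟨i, ?_⟩
  by_cases hrest : ∃ j ∈ Finset.univ.erase i, x j ≠ 0
  · have hhead : TPos (α i * x i ^ 2) := by
      simpa using tPos_sum_mul_sq (s := {i}) (fun j _ => hα j) ⟨i, by simp, hxi⟩
    have htail := tPos_sum_mul_sq (fun j _ => hα j) hrest
    have hsplit := Finset.add_sum_erase _ (fun j => α j * x j ^ 2) (Finset.mem_univ i)
    exact absurd ⟨_, _, hhead, htail, hx ▸ hsplit.symm⟩ hind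
  · push Not at hrest
    rw [← hx, Fintype.sum_eq_single i fun j hj => by simp [hrest j (by simp [hj])]]

end TotallyPositive

theorem stmt4_general {K : Type} [Field K] [NumberField K]
    (β : 𝓞 K)
    (hsf : ∀ ω : 𝓞 K, ω ^ 2 ∣ β → IsUnit ω)
    (hind : ¬ ∃ γ δ : 𝓞 K, TPos γ ∧ TPos δ ∧ β = γ + δ)
    (k : ℕ) (α : Fin k → 𝓞 K)
    (hαpos : ∀ i, TPos (α i))
    (hαn : ∀ i, Nm (α i) < Nm β)
    (hreprs : ∀ γ : 𝓞 K, TPos γ → Nm γ < Nm β →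
      ∃ i, ∃ ε : (𝓞 K)ˣ, γ = α i * (ε : 𝓞 K) ^ 2) :
    (∀ γ : 𝓞 K, TPos γ → Nm γ < Nm β →
      ∃ x : Fin k → 𝓞 K, ∑ i, α i * (x i) ^ 2 = γ) ∧
    ¬ ∃ x : Fin k → 𝓞 K, ∑ i, α i * (x i) ^ 2 = β := by
  constructor
  · intro γ hγ hn
    obtain ⟨i, ε, rfl⟩ := hreprs γ hγ hn
    exact ⟨Pi.single i ε, sum_mul_pi_single_sq α i _⟩
  · rintro ⟨x, hx⟩
    have hsq : Squarefree β := fun ω h => hsf ω (by rwa [sq])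
    obtain ⟨i, hi⟩ := exists_eq_mul_sq_of_indecomposable hind hsq.ne_zero hαpos hx
    have hu : IsUnit (x i) := hsf (x i) ⟨α i, by rw [hi, mul_comm]⟩
    exact (hαn i).ne' (hi ▸ nm_mul_sq_of_isUnit (α i) hu)

/-- for a squarefree indecomposable $β$, the diagonal lattice on
representatives of all classes of norm $< N(β)$ represents every totally positive
integer of norm $< N(β)$ but not $β$. -/
theorem stmt4 {K : Type} [Field K] [NumberField K] (hK : TotReal K)
    (β : 𝓞 K) (hβ : TPos β)
    (hsf : ∀ ω : 𝓞 K, ω ^ 2 ∣ β → IsUnit ω)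
    (hind : ¬ ∃ γ δ : 𝓞 K, TPos γ ∧ TPos δ ∧ β = γ + δ)
    (k : ℕ) (α : Fin k → 𝓞 K)
    (hαpos : ∀ i, TPos (α i))
    (hαn : ∀ i, Nm (α i) < Nm β)
    (hreprs : ∀ γ : 𝓞 K, TPos γ → Nm γ < Nm β →
      ∃ i, ∃ ε : (𝓞 K)ˣ, γ = α i * (ε : 𝓞 K) ^ 2) :
    (∀ γ : 𝓞 K, TPos γ → Nm γ < Nm β →
      ∃ x : Fin k → 𝓞 K, ∑ i, α i * (x i) ^ 2 = γ) ∧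
    ¬ ∃ x : Fin k → 𝓞 K, ∑ i, α i * (x i) ^ 2 = β :=
  stmt4_general β hsf hind k α hαpos hαn hreprs
end

section
/- Let K be a totally real number field in which the only decompositions of 2 as a sum of totally positive integers is 2 = 1 + 1 (which holds in every totally real field). If 2 is squarefree in O_K, and α₁, …, α_n are representatives of all squarefree classes in O_K⁺/U_K² of norm less than N(2) = 2^[K:ℚ], then the diagonal lattice D = ⟨α₁, …, α_n⟩ represents every totally positive integer of norm less than N(2) but does not represent 2. -/
open NumberField

/-- $a$ is squarefree in $\mathcal O_K$. -/
def Sqfree {K : Type} [Field K] [NumberField K] (a : 𝓞 K) : Prop :=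
  ∀ ω : 𝓞 K, ω ^ 2 ∣ a → IsUnit ω

/-! Write `γ = β ξ²` with `β` squarefree, which is possible because strict divisibility in `𝓞 K`
is well founded. Then `β` is totally positive of norm at most `N(γ)`, so `β = αᵢ ε²` for a unit
`ε` and `γ = αᵢ (ε ξ)²`. Conversely, if `2 = ∑ αᵢ xᵢ²`, the nonzero terms are totally positive, and
since `1 + 1` is the only decomposition of `2`, either there is one term `αᵢ xᵢ² = 2`, making `xᵢ`
a unit because `2` is squarefree and hence `N(αᵢ) = N(2)`, or there are exactly two terms
`αᵢ xᵢ² = αⱼ xⱼ² = 1`, which puts `αᵢ` and `αⱼ` in the same square class. -/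

theorem exists_squarefree_mul_sq {R : Type*} [CommMonoidWithZero R] [IsCancelMulZero R]
    [WfDvdMonoid R] {a : R} (ha : a ≠ 0) : ∃ b c : R, c ≠ 0 ∧ Squarefree b ∧ a = b * c ^ 2 := by
  have : Nontrivial R := ⟨⟨a, 0, ha⟩⟩
  induction a using (wellFounded_dvdNotUnit (α := R)).induction with
  | _ a ih =>
  by_cases hsq : Squarefree a
  · exact ⟨a, 1, one_ne_zero, hsq, by rw [one_pow, mul_one]⟩
  obtain ⟨c, ⟨b, rfl⟩, hc⟩ : ∃ c, c * c ∣ a ∧ ¬IsUnit c := by simpa [Squarefree] using hsq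
  obtain ⟨hcc, hb⟩ := mul_ne_zero_iff.1 ha
  have hlt : DvdNotUnit b (c * c * b) :=
    ⟨hb, c * c, fun h => hc (IsUnit.mul_iff.1 h).1, mul_comm _ _⟩
  obtain ⟨b', c', hc', hb', rfl⟩ := ih b hlt hb
  refine ⟨b', c * c', mul_ne_zero (left_ne_zero_of_mul hcc) hc', hb', ?_⟩
  rw [mul_pow, sq, sq]
  ac_rfl

theorem exists_units_eq_mul_sq_of_mul_sq_eq_one {M : Type*} [CommMonoid M] {a b x y : M}
    (ha : a * x ^ 2 = 1) (hb : b * y ^ 2 = 1) : ∃ ε : Mˣ, b = a * (ε : M) ^ 2 := by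
  refine ⟨Units.mkOfMulEqOne (x * b * y) (a * x * y) ?_, ?_⟩
  · calc x * b * y * (a * x * y) = a * x ^ 2 * (b * y ^ 2) := by rw [sq, sq]; ac_rfl
      _ = 1 := by rw [ha, hb, one_mul]
  · calc b = a * x ^ 2 * (b * y ^ 2) * b := by rw [ha, hb, one_mul, one_mul]
      _ = a * (x * b * y) ^ 2 := by rw [sq, sq, sq]; ac_rfl

section

variable {K : Type} [Field K] [NumberField K]

theorem sqfree_iff_squarefree {a : 𝓞 K} : Sqfree a ↔ Squarefree a := by
  simp only [Sqfree, Squarefree, sq]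

theorem Nm_two : Nm (2 : 𝓞 K) = 2 ^ Module.finrank ℚ K := by
  rw [Nm, ← map_ofNat (algebraMap ℤ (𝓞 K)), Algebra.norm_algebraMap, RingOfIntegers.rank]

theorem Nm_mul_sq_of_isUnit (a : 𝓞 K) {u : 𝓞 K} (hu : IsUnit u) : Nm (a * u ^ 2) = Nm a := by
  rw [Nm, map_mul, map_pow, Int.isUnit_sq (hu.map _), mul_one, Nm]

theorem Nm_lt_of_Nm_mul_sq_lt {a ξ : 𝓞 K} {c : ℤ} (hc : 0 < c) (hξ : ξ ≠ 0)
    (h : Nm (a * ξ ^ 2) < c) : Nm a < c := by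
  have hξ : 1 ≤ Nm ξ ^ 2 :=
    (one_le_sq_iff_one_le_abs _).2 (Int.one_le_abs (Algebra.norm_ne_zero_iff.2 hξ))
  rw [Nm, map_mul, map_pow, ← Nm, ← Nm] at h
  rcases lt_or_ge (Nm a) 0 with ha | ha
  · exact ha.trans hc
  · nlinarith

theorem Nm_eq_of_mul_sq_eq_of_sqfree {a x b : 𝓞 K} (hb : Sqfree b) (h : a * x ^ 2 = b) :
    Nm a = Nm b :=
  h ▸ (Nm_mul_sq_of_isUnit a (hb x ⟨a, by rw [← h, mul_comm]⟩)).symm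

theorem tPos_one : TPos (1 : 𝓞 K) := fun φ => by simp

theorem TPos.add {a b : 𝓞 K} (ha : TPos a) (hb : TPos b) : TPos (a + b) :=
  fun φ => by simpa using add_pos (ha φ) (hb φ)

theorem tPos_sum {ι : Type*} {s : Finset ι} {f : ι → 𝓞 K} (hs : s.Nonempty)
    (hf : ∀ i ∈ s, TPos (f i)) : TPos (∑ i ∈ s, f i) :=
  fun φ => by simpa using Finset.sum_pos (fun i hi => hf i hi φ) hs

theorem TPos.mul_sq_s5 {a ξ : 𝓞 K} (ha : TPos a) (hξ : ξ ≠ 0) : TPos (a * ξ ^ 2) := by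
  intro φ
  have hφξ : φ ξ ≠ 0 := by simpa using hξ
  simpa using mul_pos (ha φ) (pow_two_pos_of_ne_zero hφξ)

theorem TPos.of_mul_sq {a ξ : 𝓞 K} (h : TPos (a * ξ ^ 2)) : TPos a := fun φ =>
  pos_of_mul_pos_left (by simpa using h φ) (sq_nonneg (φ ξ))

theorem not_tPos_zero (hdec : ∀ γ δ : 𝓞 K, TPos γ → TPos δ → γ + δ = 2 → γ = 1 ∧ δ = 1) :
    ¬TPos (0 : 𝓞 K) := fun h =>
  have h2 : TPos (2 : 𝓞 K) := one_add_one_eq_two (R := 𝓞 K) ▸ tPos_one.add tPos_one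
  zero_ne_one (hdec 0 2 h h2 (zero_add 2)).1

theorem add_add_ne_two (hdec : ∀ γ δ : 𝓞 K, TPos γ → TPos δ → γ + δ = 2 → γ = 1 ∧ δ = 1)
    {a b c : 𝓞 K} (ha : TPos a) (hb : TPos b) (hc : TPos c) : a + (b + c) ≠ 2 := by
  intro h
  obtain ⟨rfl, hbc⟩ := hdec a (b + c) ha (hb.add hc) h
  obtain ⟨-, hc1⟩ :=
    hdec b (c + 1) hb (hc.add tPos_one) (by rw [← add_assoc, hbc, one_add_one_eq_two])
  exact not_tPos_zero hdec (add_eq_right.1 hc1 ▸ hc)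

theorem sum_eq_two_cases (hdec : ∀ γ δ : 𝓞 K, TPos γ → TPos δ → γ + δ = 2 → γ = 1 ∧ δ = 1)
    {ι : Type*} {s : Finset ι} {f : ι → 𝓞 K} (hf : ∀ i ∈ s, TPos (f i))
    (hsum : ∑ i ∈ s, f i = 2) :
    (∃ i, s = {i}) ∨ ∃ i j, i ≠ j ∧ f i = 1 ∧ f j = 1 := by
  classical
  obtain ⟨i, hi, -⟩ := Finset.exists_ne_zero_of_sum_ne_zero (hsum ▸ two_ne_zero)
  rw [← Finset.add_sum_erase s f hi] at hsum
  rcases (s.erase i).eq_empty_or_nonempty with hs | ⟨j, hj⟩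
  · left
    exact ⟨i, ((Finset.erase_eq_empty_iff s i).1 hs).resolve_left (Finset.ne_empty_of_mem hi)⟩
  right
  have hrest := tPos_sum ⟨j, hj⟩ fun k hk => hf k (Finset.mem_of_mem_erase hk)
  obtain ⟨hfi, hrest_eq_one⟩ := hdec _ _ (hf i hi) hrest hsum
  rw [← Finset.add_sum_erase _ f hj] at hrest_eq_one
  refine ⟨i, j, (Finset.ne_of_mem_erase hj).symm, hfi, ?_⟩
  rcases ((s.erase i).erase j).eq_empty_or_nonempty with ht | ht
  · simpa [ht] using hrest_eq_one
  · refine absurd ?_ (add_add_ne_two hdec (hf i hi) (hf j (Finset.mem_of_mem_erase hj))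
      (tPos_sum ht fun k hk => hf k (Finset.mem_of_mem_erase (Finset.mem_of_mem_erase hk))))
    rw [hrest_eq_one, hfi, one_add_one_eq_two]

theorem exists_sum_mul_sq_eq {ι : Type*} [Fintype ι] {α : ι → 𝓞 K} {c : ℤ} (hc : 0 < c)
    (hreprs : ∀ γ : 𝓞 K, TPos γ → Sqfree γ → Nm γ < c →
      ∃ i, ∃ ε : (𝓞 K)ˣ, γ = α i * (ε : 𝓞 K) ^ 2)
    {γ : 𝓞 K} (hγ : TPos γ) (hγc : Nm γ < c) : ∃ x : ι → 𝓞 K, ∑ i, α i * x i ^ 2 = γ := by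
  classical
  rcases eq_or_ne γ 0 with rfl | hγ0
  · exact ⟨0, by simp⟩
  obtain ⟨β, ξ, hξ, hβ, rfl⟩ := exists_squarefree_mul_sq hγ0
  obtain ⟨i, ε, rfl⟩ := hreprs β hγ.of_mul_sq (sqfree_iff_squarefree.2 hβ)
    (Nm_lt_of_Nm_mul_sq_lt hc hξ hγc)
  refine ⟨Pi.single i (ε * ξ), ?_⟩
  rw [Fintype.sum_eq_single i fun j hj => by simp [hj], Pi.single_eq_same]
  ring

theorem not_exists_sum_mul_sq_eq_two
    (hdec : ∀ γ δ : 𝓞 K, TPos γ → TPos δ → γ + δ = 2 → γ = 1 ∧ δ = 1)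
    (hsf2 : Sqfree (2 : 𝓞 K)) {ι : Type*} [Fintype ι] {α : ι → 𝓞 K}
    (hαpos : ∀ i, TPos (α i)) (hαn : ∀ i, Nm (α i) < Nm (2 : 𝓞 K))
    (hinj : ∀ i j, (∃ ε : (𝓞 K)ˣ, α j = α i * (ε : 𝓞 K) ^ 2) → i = j) :
    ¬∃ x : ι → 𝓞 K, ∑ i, α i * x i ^ 2 = 2 := by
  classical
  rintro ⟨x, hx⟩
  rw [← Finset.sum_filter_ne_zero] at hx
  have hpos : ∀ i ∈ Finset.univ.filter (fun i => α i * x i ^ 2 ≠ 0), TPos (α i * x i ^ 2) :=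
    fun i hi => (hαpos i).mul_sq_s5 fun h => (Finset.mem_filter.1 hi).2 (by simp [h])
  rcases sum_eq_two_cases hdec hpos hx with ⟨i, hs⟩ | ⟨i, j, hij, hi, hj⟩
  · rw [hs, Finset.sum_singleton] at hx
    exact (hαn i).ne (Nm_eq_of_mul_sq_eq_of_sqfree hsf2 hx)
  · obtain ⟨ε, hε⟩ := exists_units_eq_mul_sq_of_mul_sq_eq_one hi hj
    exact hij (hinj i j ⟨ε, hε⟩)

end

theorem stmt5_general {K : Type} [Field K] [NumberField K]
    (hdec : ∀ γ δ : 𝓞 K, TPos γ → TPos δ → γ + δ = 2 → γ = 1 ∧ δ = 1)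
    (hsf2 : Sqfree (2 : 𝓞 K))
    (n : ℕ) (α : Fin n → 𝓞 K)
    (hαpos : ∀ i, TPos (α i))
    (hαn : ∀ i, Nm (α i) < Nm (2 : 𝓞 K))
    (hreprs : ∀ γ : 𝓞 K, TPos γ → Sqfree γ → Nm γ < Nm (2 : 𝓞 K) →
      ∃ i, ∃ ε : (𝓞 K)ˣ, γ = α i * (ε : 𝓞 K) ^ 2)
    (hinj : ∀ i j, (∃ ε : (𝓞 K)ˣ, α j = α i * (ε : 𝓞 K) ^ 2) → i = j) :
    Nm (2 : 𝓞 K) = 2 ^ (Module.finrank ℚ K) ∧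
    (∀ γ : 𝓞 K, TPos γ → Nm γ < Nm (2 : 𝓞 K) →
      ∃ x : Fin n → 𝓞 K, ∑ i, α i * (x i) ^ 2 = γ) ∧
    ¬ ∃ x : Fin n → 𝓞 K, ∑ i, α i * (x i) ^ 2 = 2 :=
  ⟨Nm_two, fun _ hγ hγn => exists_sum_mul_sq_eq (by rw [Nm_two]; positivity) hreprs hγ hγn,
    not_exists_sum_mul_sq_eq_two hdec hsf2 hαpos hαn hinj⟩

/-- if $2$ is squarefree, the diagonal lattice on representatives of all
squarefree classes of norm $< N(2)=2^{[K:ℚ]}$ represents all totally positive integers of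
norm $< N(2)$ but not $2$. -/
theorem stmt5 {K : Type} [Field K] [NumberField K] (hK : TotReal K)
    (hdec : ∀ γ δ : 𝓞 K, TPos γ → TPos δ → γ + δ = 2 → γ = 1 ∧ δ = 1)
    (hsf2 : Sqfree (2 : 𝓞 K))
    (n : ℕ) (α : Fin n → 𝓞 K)
    (hαpos : ∀ i, TPos (α i))
    (hαsf : ∀ i, Sqfree (α i))
    (hαn : ∀ i, Nm (α i) < Nm (2 : 𝓞 K))
    (hreprs : ∀ γ : 𝓞 K, TPos γ → Sqfree γ → Nm γ < Nm (2 : 𝓞 K) →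
      ∃ i, ∃ ε : (𝓞 K)ˣ, γ = α i * (ε : 𝓞 K) ^ 2)
    (hinj : ∀ i j, (∃ ε : (𝓞 K)ˣ, α j = α i * (ε : 𝓞 K) ^ 2) → i = j) :
    Nm (2 : 𝓞 K) = 2 ^ (Module.finrank ℚ K) ∧
    (∀ γ : 𝓞 K, TPos γ → Nm γ < Nm (2 : 𝓞 K) →
      ∃ x : Fin n → 𝓞 K, ∑ i, α i * (x i) ^ 2 = γ) ∧
    ¬ ∃ x : Fin n → 𝓞 K, ∑ i, α i * (x i) ^ 2 = 2 :=
  stmt5_general hdec hsf2 n α hαpos hαn hreprs hinj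
end

section
/- Let m be a positive integer and K a totally real number field in which every prime dividing m is inert. If m = αω² with α, ω ∈ O_K, then there exists a unit ε ∈ U_K such that εω ∈ ℤ. -/
open NumberField

/-! Since `ω ∣ m` and `m` factors in `𝓞 K` into rational primes that stay prime there, `ω` is
associated to a subproduct of those primes, which is a rational integer. -/

theorem Multiset.exists_le_prod_map_associated_of_dvd {ι M₀ : Type*} [CommMonoidWithZero M₀]
    [IsCancelMulZero M₀] {f : ι → M₀} (s : Multiset ι) (hf : ∀ i ∈ s, Prime (f i)) {a : M₀}
    (ha : a ∣ (s.map f).prod) : ∃ t ≤ s, Associated (t.map f).prod a := by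
  induction s using Multiset.induction generalizing a with
  | empty =>
    rw [map_zero, prod_zero] at ha
    exact ⟨0, le_rfl, by simpa using (associated_one_iff_isUnit.2 (isUnit_of_dvd_one ha)).symm⟩
  | cons i s ih =>
    have hi : Prime (f i) := hf i (mem_cons_self i s)
    have hs : ∀ j ∈ s, Prime (f j) := fun j hj => hf j (mem_cons_of_mem hj)
    obtain ⟨b, hb⟩ := ha
    rw [map_cons, prod_cons] at hb
    rcases hi.dvd_or_dvd ⟨_, hb.symm⟩ with ⟨a', rfl⟩ | ⟨b', rfl⟩
    · have hdvd : a' ∣ (s.map f).prod := ⟨b, mul_left_cancel₀ hi.ne_zero (by rw [hb, mul_assoc])⟩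
      obtain ⟨t, hts, ht⟩ := ih hs hdvd
      exact ⟨i ::ₘ t, cons_le_cons i hts, by
        rw [map_cons, prod_cons]; exact (Associated.refl _).mul_mul ht⟩
    · have hdvd : a ∣ (s.map f).prod :=
        ⟨b', mul_left_cancel₀ hi.ne_zero (by rw [hb, mul_left_comm])⟩
      obtain ⟨t, hts, ht⟩ := ih hs hdvd
      exact ⟨t, hts.trans (le_cons_self s i), ht⟩

theorem stmt7_general {K : Type} [Field K] [NumberField K]
    (m : ℕ) (hm : 0 < m)
    (hinert : ∀ p : ℕ, p.Prime → p ∣ m → Prime ((p : 𝓞 K)))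
    (α ω : 𝓞 K) (h : (m : 𝓞 K) = α * ω ^ 2) :
    ∃ ε : (𝓞 K)ˣ, ∃ z : ℤ, (ε : 𝓞 K) * ω = (z : 𝓞 K) := by
  have hm_prod : ((m.primeFactorsList : Multiset ℕ).map (Nat.cast : ℕ → 𝓞 K)).prod = m := by
    rw [← Nat.cast_multiset_prod, Multiset.prod_coe, Nat.prod_primeFactorsList hm.ne']
  have hω : ω ∣ ((m.primeFactorsList : Multiset ℕ).map (Nat.cast : ℕ → 𝓞 K)).prod :=
    hm_prod ▸ h ▸ ⟨α * ω, by ring⟩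
  have hprime : ∀ p ∈ (m.primeFactorsList : Multiset ℕ), Prime (p : 𝓞 K) := fun p hp =>
    hinert p (Nat.prime_of_mem_primeFactorsList hp) (Nat.dvd_of_mem_primeFactorsList hp)
  obtain ⟨t, -, u, hu⟩ := Multiset.exists_le_prod_map_associated_of_dvd _ hprime hω
  refine ⟨u⁻¹, t.prod, ?_⟩
  rw [← hu, Int.cast_natCast, Nat.cast_multiset_prod, mul_comm, Units.mul_inv_cancel_right]

/-- if every prime dividing $m$ is inert in $K$ and $m = αω²$, then
$εω ∈ ℤ$ for some unit $ε$. -/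
theorem stmt7 {K : Type} [Field K] [NumberField K] (hK : TotReal K)
    (m : ℕ) (hm : 0 < m)
    (hinert : ∀ p : ℕ, p.Prime → p ∣ m → Prime ((p : 𝓞 K)))
    (α ω : 𝓞 K) (h : (m : 𝓞 K) = α * ω ^ 2) :
    ∃ ε : (𝓞 K)ˣ, ∃ z : ℤ, (ε : 𝓞 K) * ω = (z : 𝓞 K) :=
  stmt7_general m hm hinert α ω h
end

section
/- Let K be a totally real number field, S ⊆ O_K⁺/U_K², and α an S-critical element, i.e., there is a totally positive definite quadratic O_K-lattice L representing all of S ∖ {α} but not α. Then for every ideal class of K there is a lattice L′ with the same properties (representing S ∖ {α} but not α) whose Steinitz class lies in that ideal class; in particular there is a free lattice with these properties. -/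
open NumberField nonZeroDivisors

/-- $b$ lies in the class of $a$ modulo squares of units. -/
def SRel {K : Type} [Field K] [NumberField K] (a b : 𝓞 K) : Prop :=
  ∃ ε : (𝓞 K)ˣ, b = a * (ε : 𝓞 K) ^ 2

/-- The Steinitz class of the lattice $L$ is $c$: its underlying module is isomorphic to
$\mathcal O_K^k ⊕ \mathfrak a$ for a nonzero ideal $\mathfrak a$ of class $c$. -/
def QLat.HasSteinitz {K : Type} [Field K] [NumberField K]
    (L : QLat K) (c : ClassGroup (𝓞 K)) : Prop :=
  ∃ (k : ℕ) (I : (Ideal (𝓞 K))⁰), ClassGroup.mk0 I = c ∧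
    Nonempty (L.carrier ≃ₗ[𝓞 K] ((Fin k → 𝓞 K) × ↥(I : Ideal (𝓞 K))))

/-!
A finitely generated torsion-free module over a Dedekind domain is projective, so
`L ⊕ X ≅ 𝓞_K^n` for some `X ⊆ 𝓞_K^n`. Put the form `β ∑ xᵢ²`, `β = α² + 1`, on `X` and `βx²` on
a nonzero ideal `𝔞` of the prescribed class: then `L ⊥ X` is free and `L ⊥ X ⊥ 𝔞` has Steinitz
class `[𝔞]`. Adjoining such summands keeps every value of `L` and creates no representation of
`α`: a nonzero added vector has a coordinate `xᵢ ≠ 0`, and since `N(xᵢ)` is a nonzero integer some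
real embedding has `|φ xᵢ| ≥ 1`, whence `φ(Q(v, x)) ≥ φ(β) > φ(α)`.
-/

instance Prod.noZeroSMulDivisors {R M N : Type*} [Zero R] [Zero M] [Zero N] [SMul R M]
    [SMul R N] [NoZeroSMulDivisors R M] [NoZeroSMulDivisors R N] :
    NoZeroSMulDivisors R (M × N) where
  eq_zero_or_eq_zero_of_smul_eq_zero h := or_iff_not_imp_left.mpr fun hc ↦
    Prod.ext ((eq_zero_or_eq_zero_of_smul_eq_zero congr(($h).1)).resolve_left hc)
      ((eq_zero_or_eq_zero_of_smul_eq_zero congr(($h).2)).resolve_left hc)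

instance Submodule.noZeroSMulDivisors {R M : Type*} [Semiring R] [AddCommMonoid M] [Module R M]
    [NoZeroSMulDivisors R M] (p : Submodule R M) : NoZeroSMulDivisors R p :=
  Subtype.val_injective.noZeroSMulDivisors _ rfl fun _ _ ↦ rfl

theorem IsDedekindDomain.projective_of_torsionFree (R M : Type*) [CommRing R] [IsDedekindDomain R]
    [AddCommGroup M] [Module R M] [Module.Finite R M] [NoZeroSMulDivisors R M] :
    Module.Projective R M :=
  have := Module.finitePresentation_of_finite R M
  Module.Flat.projective_of_finitePresentation

theorem Module.Projective.exists_prod_submodule_linearEquiv_pi (R M : Type*) [Ring R]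
    [AddCommGroup M] [Module R M] [Module.Finite R M] [Module.Projective R M] :
    ∃ (n : ℕ) (N : Submodule R (Fin n → R)), Nonempty ((M × N) ≃ₗ[R] (Fin n → R)) := by
  obtain ⟨n, f, g, -, -, hfg⟩ := Module.Finite.exists_comp_eq_id_of_projective R M
  obtain ⟨e, -⟩ := (LinearMap.exact_subtype_ker_map f).splitSurjectiveEquiv
    (LinearMap.ker f).injective_subtype ⟨g, hfg⟩
  exact ⟨n, LinearMap.ker f, ⟨LinearEquiv.prodComm R _ _ ≪≫ₗ e.symm⟩⟩

section NumberField

variable {K : Type} [Field K] [NumberField K]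

theorem exists_ringHom_one_le_abs (hK : TotReal K) {x : 𝓞 K} (hx : x ≠ 0) :
    ∃ φ : K →+* ℝ, 1 ≤ |φ x| := by
  obtain ⟨w, hw⟩ : ∃ w : InfinitePlace K, 1 ≤ w x := by
    by_contra! h
    exact (h (Classical.arbitrary _)).not_ge (InfinitePlace.one_le_of_lt_one hx fun z _ ↦ h z)
  exact ⟨InfinitePlace.embedding_of_isReal (hK w), by
    rwa [← Real.norm_eq_abs, InfinitePlace.norm_embedding_of_isReal]⟩

variable {ι : Type*} [Fintype ι]

theorem map_weightedSumSquares_const (φ : K →+* ℝ) (β : 𝓞 K) (w : ι → 𝓞 K) :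
    φ (QuadraticMap.weightedSumSquares (𝓞 K) (fun _ : ι ↦ β) w : 𝓞 K) =
      φ β * ∑ i, φ (w i) ^ 2 := by
  simp [QuadraticMap.weightedSumSquares_apply, Finset.mul_sum, sq]

theorem tPos_weightedSumSquares_const {β : 𝓞 K} (hβ : TPos β) {w : ι → 𝓞 K} (hw : w ≠ 0) :
    TPos (QuadraticMap.weightedSumSquares (𝓞 K) (fun _ : ι ↦ β) w) := by
  intro φ
  obtain ⟨i, hi⟩ := Function.ne_iff.mp hw
  have hφi : φ (w i) ≠ 0 := by simpa using hi
  rw [map_weightedSumSquares_const]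
  exact mul_pos (hβ φ)
    (Finset.sum_pos' (fun j _ ↦ sq_nonneg _) ⟨i, Finset.mem_univ i, by positivity⟩)

theorem exists_le_weightedSumSquares_const (hK : TotReal K) {β : 𝓞 K} (hβ : TPos β)
    {w : ι → 𝓞 K} (hw : w ≠ 0) :
    ∃ φ : K →+* ℝ, φ β ≤ φ (QuadraticMap.weightedSumSquares (𝓞 K) (fun _ : ι ↦ β) w : 𝓞 K) := by
  obtain ⟨i, hi⟩ := Function.ne_iff.mp hw
  obtain ⟨φ, hφ⟩ := exists_ringHom_one_le_abs hK hi
  refine ⟨φ, ?_⟩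
  rw [map_weightedSumSquares_const]
  have hsum : 1 ≤ ∑ j, φ (w j) ^ 2 := calc
    1 ≤ φ (w i) ^ 2 := by nlinarith [sq_abs (φ (w i))]
    _ ≤ ∑ j, φ (w j) ^ 2 :=
      Finset.single_le_sum (f := fun j ↦ φ (w j) ^ 2) (fun j _ ↦ sq_nonneg _) (Finset.mem_univ i)
  nlinarith [hβ φ]

end NumberField

namespace QLat

variable {K : Type} [Field K] [NumberField K]

def Critical (L : QLat K) (S : Set (𝓞 K)) (α : 𝓞 K) : Prop :=
  L.PosDef ∧ (∀ a ∈ S, ¬ SRel α a → L.Rep a) ∧ ¬ L.Rep α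

theorem PosDef.nonneg {L : QLat K} (hL : L.PosDef) (v : L.carrier) (φ : K →+* ℝ) :
    0 ≤ φ (L.Q v : 𝓞 K) := by
  rcases eq_or_ne v 0 with rfl | hv
  · simp
  · exact (hL v hv φ).le

variable {N : Type} [AddCommGroup N] [Module (𝓞 K) N] [Module.Finite (𝓞 K) N]
  [NoZeroSMulDivisors (𝓞 K) N] {ι : Type} [Fintype ι]

/-- `L ⊥ N`, where `N` carries the form `x ↦ β ∑ᵢ (f x)ᵢ²`; the paper's `𝔞⟨β⟩` is the case
of an ideal `N = 𝔞` with `ι = Unit`. -/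
noncomputable def prodSumSquares (L : QLat K) (β : 𝓞 K) (f : N →ₗ[𝓞 K] ι → 𝓞 K) : QLat K where
  carrier := L.carrier × N
  Q := L.Q.prod ((QuadraticMap.weightedSumSquares (𝓞 K) fun _ : ι ↦ β).comp f)

variable {L : QLat K} {β : 𝓞 K} {f : N →ₗ[𝓞 K] ι → 𝓞 K}

theorem prodSumSquares_Q (v : L.carrier) (x : N) :
    (L.prodSumSquares β f).Q (v, x) =
      L.Q v + QuadraticMap.weightedSumSquares (𝓞 K) (fun _ : ι ↦ β) (f x) :=
  rfl

theorem posDef_prodSumSquares (hL : L.PosDef) (hβ : TPos β) (hf : Function.Injective f) :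
    (L.prodSumSquares β f).PosDef := by
  rintro ⟨v, x⟩ hvx φ
  rw [prodSumSquares_Q]
  push_cast
  rw [map_add]
  rcases eq_or_ne x 0 with rfl | hx
  · have hv : v ≠ 0 := fun hv ↦ hvx (by rw [hv]; rfl)
    simpa using hL v hv φ
  · have hfx : f x ≠ 0 := (map_ne_zero_iff f hf).mpr hx
    exact add_pos_of_nonneg_of_pos (hL.nonneg v φ) (tPos_weightedSumSquares_const hβ hfx φ)

theorem Rep.prodSumSquares {a : 𝓞 K} (h : L.Rep a) : (L.prodSumSquares β f).Rep a := by
  obtain ⟨v, hv⟩ := h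
  exact ⟨(v, 0), by simp [prodSumSquares_Q, hv]⟩

theorem not_rep_prodSumSquares (hK : TotReal K) (hL : L.PosDef) (hβ : TPos β)
    (hf : Function.Injective f) {α : 𝓞 K} (hαβ : ∀ φ : K →+* ℝ, φ α < φ β) (hα : ¬ L.Rep α) :
    ¬ (L.prodSumSquares β f).Rep α := by
  rintro ⟨⟨v, x⟩, hvx⟩
  rw [prodSumSquares_Q] at hvx
  rcases eq_or_ne x 0 with rfl | hx
  · exact hα ⟨v, by simpa using hvx⟩
  obtain ⟨φ, hφ⟩ := exists_le_weightedSumSquares_const hK hβ ((map_ne_zero_iff f hf).mpr hx)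
  have hφvx := congrArg (fun y : 𝓞 K ↦ φ y) hvx
  push_cast at hφvx
  rw [map_add] at hφvx
  linarith [hL.nonneg v φ, hαβ φ]

theorem Critical.prodSumSquares (hK : TotReal K) {S : Set (𝓞 K)} {α : 𝓞 K}
    (hL : L.Critical S α) (hf : Function.Injective f) :
    (L.prodSumSquares (α ^ 2 + 1) f).Critical S α := by
  obtain ⟨hpos, hrep, hnot⟩ := hL
  have hβ : TPos (α ^ 2 + 1) := fun φ ↦ by
    push_cast; rw [map_add, map_pow, map_one]; positivity
  have hαβ : ∀ φ : K →+* ℝ, φ α < φ ((α ^ 2 + 1 : 𝓞 K) : K) := fun φ ↦ by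
    push_cast; rw [map_add, map_pow, map_one]; nlinarith [sq_nonneg (φ α - 1)]
  exact ⟨posDef_prodSumSquares hpos hβ hf, fun a ha hSa ↦ (hrep a ha hSa).prodSumSquares,
    not_rep_prodSumSquares hK hpos hβ hf hαβ hnot⟩

end QLat

theorem stmt19_general {K : Type} [Field K] [NumberField K] (hK : TotReal K)
    (S : Set (𝓞 K))
    (α : 𝓞 K)
    (L : QLat K) (hpos : L.PosDef)
    (hrep : ∀ a ∈ S, ¬ SRel α a → L.Rep a) (hnot : ¬ L.Rep α) :
    (∀ c : ClassGroup (𝓞 K), ∃ L' : QLat K, L'.PosDef ∧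
      (∀ a ∈ S, ¬ SRel α a → L'.Rep a) ∧ ¬ L'.Rep α ∧ L'.HasSteinitz c) ∧
    (∃ L' : QLat K, Module.Free (𝓞 K) L'.carrier ∧ L'.PosDef ∧
      (∀ a ∈ S, ¬ SRel α a → L'.Rep a) ∧ ¬ L'.Rep α) := by
  have hL : L.Critical S α := ⟨hpos, hrep, hnot⟩
  have := IsDedekindDomain.projective_of_torsionFree (𝓞 K) L.carrier
  obtain ⟨n, X, ⟨e⟩⟩ := Module.Projective.exists_prod_submodule_linearEquiv_pi (𝓞 K) L.carrier
  have hL₀ := hL.prodSumSquares hK X.injective_subtype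
  refine ⟨fun c ↦ ?_, _, Module.Free.of_equiv e.symm, hL₀⟩
  obtain ⟨A, rfl⟩ := ClassGroup.mk0_surjective c
  have hA : Function.Injective (LinearMap.pi fun _ : Unit ↦ (A : Ideal (𝓞 K)).subtype) :=
    fun x y h ↦ Subtype.ext (congrFun h ())
  obtain ⟨h₁, h₂, h₃⟩ := hL₀.prodSumSquares hK hA
  exact ⟨_, h₁, h₂, h₃, n, A, rfl, ⟨e.prodCongr (.refl _ _)⟩⟩

/-- if $α$ is $S$-critical, witnessed by a lattice $L$, then for every
ideal class of $K$ there is a witnessing lattice with Steinitz class in that ideal class;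
in particular there is a free witnessing lattice. -/
theorem stmt19 {K : Type} [Field K] [NumberField K] (hK : TotReal K)
    (S : Set (𝓞 K)) (hStp : ∀ a ∈ S, TPos a)
    (α : 𝓞 K) (hαS : α ∈ S)
    (L : QLat K) (hpos : L.PosDef)
    (hrep : ∀ a ∈ S, ¬ SRel α a → L.Rep a) (hnot : ¬ L.Rep α) :
    (∀ c : ClassGroup (𝓞 K), ∃ L' : QLat K, L'.PosDef ∧
      (∀ a ∈ S, ¬ SRel α a → L'.Rep a) ∧ ¬ L'.Rep α ∧ L'.HasSteinitz c) ∧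
    (∃ L' : QLat K, Module.Free (𝓞 K) L'.carrier ∧ L'.PosDef ∧
      (∀ a ∈ S, ¬ SRel α a → L'.Rep a) ∧ ¬ L'.Rep α) :=
  stmt19_general hK S α L hpos hrep hnot
end
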